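/- For c > 0, λ > 0, the integral of the density p(x,t) = (1/(2c·cosh(λt))) · ∂/∂t [I₀((λ/c)√(c²t² - x²))] over |x| < ct equals 1 - 1/cosh(λt). -/

import Mathlib

/-!
Expanding `I₁` in its power series, the integrand becomes `∑ₖ bₖ (a² - x²)ᵏ` with `a = ct`, and
each term integrates in closed form by the Wallis integral `∫₋₁¹ (1 - u²)ᵏ du = 2²ᵏ⁺¹ (k!)² / (2k+1)!`.
The factorials telescope so that `z ∫ I₁((z/a)√(a²-x²)) / √(a²-x²) dx = 2 ∑ₖ z²⁽ᵏ⁺¹⁾ / (2(k+1))!`,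
which is `2 (cosh z - 1)`; all terms are nonnegative, so the interchange of sum and integral is
justified by the summability of the termwise integrals.
-/

open Real MeasureTheory

/-- Modified Bessel function of the first kind of order 1. -/
noncomputable def besselI1 (z : ℝ) : ℝ :=
  ∑' k : ℕ, (z / 2) ^ (2 * k + 1) / ((Nat.factorial k : ℝ) * (Nat.factorial (k + 1) : ℝ))

open Set
open scoped Nat

theorem two_mul_prod_range_div_eq_factorial (n : ℕ) :
    2 * ∏ i ∈ Finset.range n, (2 * (i : ℝ) + 2) / (2 * i + 3)
      = 2 ^ (2 * n + 1) * (n ! : ℝ) ^ 2 / (2 * n + 1)! := by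
  induction n with
  | zero => norm_num
  | succ n ih =>
    rw [Finset.prod_range_succ, ← mul_assoc, ih, show 2 * (n + 1) + 1 = 2 * n + 1 + 1 + 1 by ring,
      Nat.factorial_succ (2 * n + 1 + 1), Nat.factorial_succ (2 * n + 1), Nat.factorial_succ n]
    push_cast
    field_simp
    ring

theorem integral_one_sub_sq_pow (n : ℕ) :
    ∫ u in (-1 : ℝ)..1, (1 - u ^ 2) ^ n = 2 ^ (2 * n + 1) * (n ! : ℝ) ^ 2 / (2 * n + 1)! := by
  have h := integral_sin_pow_odd_mul_cos_pow (a := 0) (b := π) n 0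
  simp only [pow_zero, mul_one, one_mul, cos_pi, cos_zero] at h
  rw [← h, integral_sin_pow_odd, two_mul_prod_range_div_eq_factorial]

theorem integral_Ioo_sq_sub_sq_pow {a : ℝ} (ha : 0 ≤ a) (n : ℕ) :
    ∫ x in Ioo (-a) a, (a ^ 2 - x ^ 2) ^ n
      = a ^ (2 * n + 1) * (2 ^ (2 * n + 1) * (n ! : ℝ) ^ 2 / (2 * n + 1)!) := by
  have hscale := intervalIntegral.smul_integral_comp_mul_left
    (fun x => (a ^ 2 - x ^ 2) ^ n) a (a := -1) (b := 1)
  have hpoly (u : ℝ) : (a ^ 2 - (a * u) ^ 2) ^ n = a ^ (2 * n) * (1 - u ^ 2) ^ n := by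
    rw [pow_mul, ← mul_pow]; ring
  simp only [mul_neg, mul_one, hpoly, intervalIntegral.integral_const_mul,
    integral_one_sub_sq_pow, smul_eq_mul] at hscale
  rw [← integral_Ioc_eq_integral_Ioo, ← intervalIntegral.integral_of_le (by linarith), ← hscale]
  ring

theorem besselI1_mul_sqrt_div_sqrt (r : ℝ) {s : ℝ} (hs : 0 < s) :
    besselI1 (r * √s) / √s = ∑' k : ℕ, (r / 2) ^ (2 * k + 1) * s ^ k / (k ! * (k + 1)!) := by
  rw [besselI1, ← tsum_div_const]
  refine tsum_congr fun k => ?_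
  have hsqrt : √s ^ (2 * k + 1) = s ^ k * √s := by
    rw [pow_succ, pow_mul, sq_sqrt hs.le]
  rw [mul_div_right_comm, mul_pow, hsqrt]
  field_simp [(sqrt_pos.2 hs).ne']

theorem hasSum_cosh_sub_one (z : ℝ) :
    HasSum (fun k : ℕ => z ^ (2 * (k + 1)) / (2 * (k + 1))!) (cosh z - 1) := by
  simpa using (hasSum_nat_add_iff' 1).2 (hasSum_cosh z)

theorem mul_integral_besselI1_div_sqrt {a : ℝ} (ha : 0 < a) (z : ℝ) :
    z * ∫ x in Ioo (-a) a, besselI1 (z / a * √(a ^ 2 - x ^ 2)) / √(a ^ 2 - x ^ 2)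
      = 2 * (cosh z - 1) := by
  set F : ℕ → ℝ → ℝ := fun k x =>
    2 * a * (z / (2 * a)) ^ (2 * (k + 1)) * (a ^ 2 - x ^ 2) ^ k / (k ! * (k + 1)!)
  have hpos : ∀ x ∈ Ioo (-a) a, 0 < a ^ 2 - x ^ 2 := fun x ⟨h₁, h₂⟩ => by nlinarith
  have hseries : EqOn (fun x => z * (besselI1 (z / a * √(a ^ 2 - x ^ 2)) / √(a ^ 2 - x ^ 2)))
      (fun x => ∑' k, F k x) (Ioo (-a) a) := fun x hx => by
    simp only [besselI1_mul_sqrt_div_sqrt _ (hpos x hx), ← tsum_mul_left, F]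
    refine tsum_congr fun k => ?_
    rw [show 2 * (k + 1) = 2 * k + 1 + 1 by ring]
    simp only [div_pow, mul_pow]
    field_simp
    ring
  have hF_int (k : ℕ) : ∫ x in Ioo (-a) a, F k x = 2 * (z ^ (2 * (k + 1)) / (2 * (k + 1))!) := by
    simp only [F, integral_div, integral_const_mul, integral_Ioo_sq_sub_sq_pow ha.le,
      show 2 * (k + 1) = 2 * k + 1 + 1 by ring, Nat.factorial_succ]
    push_cast
    simp only [div_pow, mul_pow]
    field_simp
    ring
  have hF_nonneg (k : ℕ) : ∀ x ∈ Ioo (-a) a, 0 ≤ F k x := fun x hx => by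
    have hs := hpos x hx
    have hpow := (even_two_mul (k + 1)).pow_nonneg (z / (2 * a))
    positivity
  have hF_integrable (k : ℕ) : IntegrableOn (F k) (Ioo (-a) a) :=
    (Continuous.integrableOn_Icc (by fun_prop)).mono_set Ioo_subset_Icc_self
  have hsum : HasSum (fun k => ∫ x in Ioo (-a) a, F k x) (2 * (cosh z - 1)) := by
    simpa only [hF_int] using (hasSum_cosh_sub_one z).mul_left 2
  have hsum_norm : Summable fun k => ∫ x in Ioo (-a) a, ‖F k x‖ := by
    refine hsum.summable.congr fun k => setIntegral_congr_fun measurableSet_Ioo fun x hx => ?_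
    exact (Real.norm_of_nonneg (hF_nonneg k x hx)).symm
  rw [← integral_const_mul, setIntegral_congr_fun measurableSet_Ioo hseries]
  exact (hasSum_integral_of_summable_integral_norm hF_integrable hsum_norm).unique hsum

theorem tanh_telegraph_ac_mass_general (c lam t : ℝ) (hc : 0 < c) (ht : 0 < t) :
    ∫ x in Set.Ioo (-(c * t)) (c * t),
      lam * t / (2 * Real.cosh (lam * t))
        * besselI1 (lam / c * Real.sqrt (c ^ 2 * t ^ 2 - x ^ 2))
        / Real.sqrt (c ^ 2 * t ^ 2 - x ^ 2)
      = 1 - 1 / Real.cosh (lam * t) := by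
  have hratio : lam / c = lam * t / (c * t) := (mul_div_mul_right lam c ht.ne').symm
  calc _ = lam * t / (2 * cosh (lam * t)) * ∫ x in Ioo (-(c * t)) (c * t),
          besselI1 (lam * t / (c * t) * √((c * t) ^ 2 - x ^ 2)) / √((c * t) ^ 2 - x ^ 2) := by
        rw [← integral_const_mul, hratio, mul_pow]
        simp only [mul_div_assoc]
    _ = 1 - 1 / cosh (lam * t) := by
        rw [div_mul_eq_mul_div, mul_integral_besselI1_div_sqrt (mul_pos hc ht)]
        field_simp

/-- the absolutely continuous part of the `λ tanh(λt)`-telegraph law has total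
mass `1 - 1/cosh(λt)` on `(-ct, ct)`. -/
theorem tanh_telegraph_ac_mass (c lam t : ℝ) (hc : 0 < c) (hlam : 0 < lam) (ht : 0 < t) :
    ∫ x in Set.Ioo (-(c * t)) (c * t),
      lam * t / (2 * Real.cosh (lam * t))
        * besselI1 (lam / c * Real.sqrt (c ^ 2 * t ^ 2 - x ^ 2))
        / Real.sqrt (c ^ 2 * t ^ 2 - x ^ 2)
      = 1 - 1 / Real.cosh (lam * t) :=
  tanh_telegraph_ac_mass_general c lam t hc ht
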